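/- arXiv:2510.09345 — 2 statements merged into one kernel-verified Lean document; each statement's English description precedes it below -/
import Mathlib

section
/- Define γ : ℝ → 𝕃⁴ by γ(t) = (t, e^{-1/t}, 0, 0) for t > 0, γ(0) = (0,0,0,0), and γ(t) = (t, 0, e^{1/t}, 0) for t < 0. Then γ is a smooth curve with ⟨γ'(t),γ'(t)⟩ < 0 for all t (a regular time-like curve), and, with unit tangent T(t) := γ'(t)/√(-⟨γ'(t),γ'(t)⟩), there exist no smooth maps D₁ : ℝ → ℝ⁴ and d₁ : ℝ → ℝ satisfying ⟨D₁,D₁⟩ = 1, ⟨T,D₁⟩ = 0 and T' = d₁D₁ pointwise. -/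
open Set Real

noncomputable section

/-- The Minkowski form on `ℝ⁴ = 𝕃⁴`: `⟨x,y⟩ = -x₀y₀ + x₁y₁ + x₂y₂ + x₃y₃`. -/
def mink (x y : Fin 4 → ℝ) : ℝ :=
  -(x 0 * y 0) + x 1 * y 1 + x 2 * y 2 + x 3 * y 3

/-- `(T, Z₁, Z₂, Z₃)` is an orthonormal frame along a time-like curve with tangent `T`:
the `Zᵢ` are smooth on `I`, pairwise orthonormal (space-like) and orthogonal to `T`. -/
def OrthFrame (I : Set ℝ) (T Z₁ Z₂ Z₃ : ℝ → Fin 4 → ℝ) : Prop :=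
  ContDiffOn ℝ (⊤ : ℕ∞) Z₁ I ∧ ContDiffOn ℝ (⊤ : ℕ∞) Z₂ I ∧ ContDiffOn ℝ (⊤ : ℕ∞) Z₃ I ∧
  ∀ s ∈ I,
    mink (Z₁ s) (Z₁ s) = 1 ∧ mink (Z₂ s) (Z₂ s) = 1 ∧ mink (Z₃ s) (Z₃ s) = 1 ∧
    mink (Z₁ s) (Z₂ s) = 0 ∧ mink (Z₁ s) (Z₃ s) = 0 ∧ mink (Z₂ s) (Z₃ s) = 0 ∧
    mink (T s) (Z₁ s) = 0 ∧ mink (T s) (Z₂ s) = 0 ∧ mink (T s) (Z₃ s) = 0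

/-- `γ` is a smooth time-like curve parametrized by proper time on `I`. -/
def ProperTime (I : Set ℝ) (γ : ℝ → Fin 4 → ℝ) : Prop :=
  ContDiffOn ℝ (⊤ : ℕ∞) γ I ∧ ∀ s ∈ I, mink (deriv γ s) (deriv γ s) = -1

/-- Three smooth real functions on `I`. -/
def Smooth3 (I : Set ℝ) (x₁ x₂ x₃ : ℝ → ℝ) : Prop :=
  ContDiffOn ℝ (⊤ : ℕ∞) x₁ I ∧ ContDiffOn ℝ (⊤ : ℕ∞) x₂ I ∧ ContDiffOn ℝ (⊤ : ℕ∞) x₃ I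

/-- `γ` admits a generalized Bishop frame of type B. -/
def AdmitsB (I : Set ℝ) (γ : ℝ → Fin 4 → ℝ) : Prop :=
  ∃ (Z₁ Z₂ Z₃ : ℝ → Fin 4 → ℝ) (x₁ x₂ x₃ : ℝ → ℝ),
    OrthFrame I (deriv γ) Z₁ Z₂ Z₃ ∧ Smooth3 I x₁ x₂ x₃ ∧
    ∀ s ∈ I,
      deriv (deriv γ) s = x₁ s • Z₁ s + x₂ s • Z₂ s + x₃ s • Z₃ s ∧
      deriv Z₁ s = x₁ s • deriv γ s ∧
      deriv Z₂ s = x₂ s • deriv γ s ∧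
      deriv Z₃ s = x₃ s • deriv γ s

/-- `γ` admits a generalized Bishop frame of type C. -/
def AdmitsC (I : Set ℝ) (γ : ℝ → Fin 4 → ℝ) : Prop :=
  ∃ (Z₁ Z₂ Z₃ : ℝ → Fin 4 → ℝ) (x₁ x₂ x₃ : ℝ → ℝ),
    OrthFrame I (deriv γ) Z₁ Z₂ Z₃ ∧ Smooth3 I x₁ x₂ x₃ ∧
    ∀ s ∈ I,
      deriv (deriv γ) s = x₁ s • Z₁ s + x₂ s • Z₂ s ∧
      deriv Z₁ s = x₁ s • deriv γ s + x₃ s • Z₃ s ∧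
      deriv Z₂ s = x₂ s • deriv γ s ∧
      deriv Z₃ s = (-(x₃ s)) • Z₁ s

/-- `γ` admits a generalized Bishop frame of type D. -/
def AdmitsD (I : Set ℝ) (γ : ℝ → Fin 4 → ℝ) : Prop :=
  ∃ (Z₁ Z₂ Z₃ : ℝ → Fin 4 → ℝ) (x₁ x₂ x₃ : ℝ → ℝ),
    OrthFrame I (deriv γ) Z₁ Z₂ Z₃ ∧ Smooth3 I x₁ x₂ x₃ ∧
    ∀ s ∈ I,
      deriv (deriv γ) s = x₁ s • Z₁ s ∧
      deriv Z₁ s = x₁ s • deriv γ s + x₂ s • Z₂ s + x₃ s • Z₃ s ∧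
      deriv Z₂ s = (-(x₂ s)) • Z₁ s ∧
      deriv Z₃ s = (-(x₃ s)) • Z₁ s

/-- `γ` admits a generalized Bishop frame of type F. -/
def AdmitsF (I : Set ℝ) (γ : ℝ → Fin 4 → ℝ) : Prop :=
  ∃ (Z₁ Z₂ Z₃ : ℝ → Fin 4 → ℝ) (x₁ x₂ x₃ : ℝ → ℝ),
    OrthFrame I (deriv γ) Z₁ Z₂ Z₃ ∧ Smooth3 I x₁ x₂ x₃ ∧
    ∀ s ∈ I,
      deriv (deriv γ) s = x₁ s • Z₁ s ∧
      deriv Z₁ s = x₁ s • deriv γ s + x₂ s • Z₂ s ∧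
      deriv Z₂ s = (-(x₂ s)) • Z₁ s + x₃ s • Z₃ s ∧
      deriv Z₃ s = (-(x₃ s)) • Z₂ s

/-- The curve of Example `noD`: `γ(t) = (t, e^{-1/t}, 0, 0)` for `t > 0`, `γ(0) = 0`,
`γ(t) = (t, 0, e^{1/t}, 0)` for `t < 0`. -/
def gammaNoD : ℝ → Fin 4 → ℝ := fun t =>
  if 0 < t then ![t, Real.exp (-(1 / t)), 0, 0]
  else if t < 0 then ![t, 0, Real.exp (1 / t), 0]
  else ![0, 0, 0, 0]

/-- The unit tangent vector `T(t) = γ'(t) / √(-⟨γ'(t), γ'(t)⟩)` of `gammaNoD`. -/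
def unitTangentNoD : ℝ → Fin 4 → ℝ := fun t =>
  (Real.sqrt (-(mink (deriv gammaNoD t) (deriv gammaNoD t))))⁻¹ • deriv gammaNoD t

/-! The coordinates of `gammaNoD` are `t`, `expNegInvGlue t`, `expNegInvGlue (-t)` and `0`, so the
curve is smooth. For `t > 0` it stays in the `x₀x₁`-plane, and the `x₁`-component of `T'` is positive
for `0 < t < 1/2`; hence `d₁ ≠ 0` there and `D₁` has vanishing `x₂`- and `x₃`-components.
Symmetrically, the `x₁`-component of `D₁` vanishes on `(-1/2, 0)`. By continuity `D₁(0)` is a multiple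
of `e₀ = T(0)`; being orthogonal to `T(0)` it is zero, contradicting `⟨D₁, D₁⟩ = 1`. -/

def glueDeriv (x : ℝ) : ℝ := x⁻¹ ^ 2 * expNegInvGlue x

def glueDeriv2 (x : ℝ) : ℝ := (x⁻¹ ^ 4 - 2 * x⁻¹ ^ 3) * expNegInvGlue x

lemma hasDerivAt_expNegInvGlue (x : ℝ) : HasDerivAt expNegInvGlue (glueDeriv x) x := by
  simpa [glueDeriv] using expNegInvGlue.hasDerivAt_polynomial_eval_inv_mul 1 x

open Polynomial in
lemma hasDerivAt_glueDeriv (x : ℝ) : HasDerivAt glueDeriv (glueDeriv2 x) x := by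
  convert expNegInvGlue.hasDerivAt_polynomial_eval_inv_mul (X ^ 2) x using 1
  · ext y; simp [glueDeriv]
  · rw [glueDeriv2]
    congr 1
    simp only [eval_mul, eval_sub, eval_pow, eval_X, derivative_X_pow, eval_C]
    ring

lemma glueDeriv_of_nonpos {x : ℝ} (hx : x ≤ 0) : glueDeriv x = 0 := by
  simp [glueDeriv, expNegInvGlue.zero_of_nonpos hx]

lemma glueDeriv2_of_nonpos {x : ℝ} (hx : x ≤ 0) : glueDeriv2 x = 0 := by
  simp [glueDeriv2, expNegInvGlue.zero_of_nonpos hx]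

lemma glueDeriv_nonneg (x : ℝ) : 0 ≤ glueDeriv x :=
  mul_nonneg (by positivity) (expNegInvGlue.nonneg x)

lemma sq_lt_exp {u : ℝ} (hu : 0 < u) : u ^ 2 < exp u := by
  have h : ∑ i ∈ Finset.range 4, u ^ i / i.factorial ≤ exp u := sum_le_exp_of_nonneg hu.le 4
  simp only [Finset.sum_range_succ, Finset.sum_range_zero, Nat.factorial] at h
  nlinarith [sq_nonneg (u - 1)]

lemma glueDeriv_lt_one (x : ℝ) : glueDeriv x < 1 := by
  rcases le_or_gt x 0 with hx | hx
  · simp [glueDeriv_of_nonpos hx]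
  · have hglue : expNegInvGlue x = (exp x⁻¹)⁻¹ := by
      simp [expNegInvGlue, hx.not_ge, exp_neg]
    rw [glueDeriv, hglue, ← div_eq_mul_inv, div_lt_one (exp_pos _)]
    exact sq_lt_exp (inv_pos.2 hx)

lemma glueDeriv_sq_lt_one (x : ℝ) : glueDeriv x ^ 2 < 1 := by
  have := glueDeriv_nonneg x
  have := glueDeriv_lt_one x
  nlinarith

lemma glueDeriv2_pos {x : ℝ} (h0 : 0 < x) (h1 : x < 1 / 2) : 0 < glueDeriv2 x := by
  have h : 2 < x⁻¹ := by rw [lt_inv_comm₀ two_pos h0]; linarith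
  have : 2 * x⁻¹ ^ 3 < x⁻¹ ^ 4 := by
    have := pow_pos (inv_pos.2 h0) 3
    nlinarith
  exact mul_pos (by linarith) (expNegInvGlue.pos_of_pos h0)

def tangentCoord (t : ℝ) : ℝ := glueDeriv t / √(1 - glueDeriv t ^ 2)

lemma hasDerivAt_div_sqrt_one_sub_sq {x : ℝ} (hx : x ^ 2 < 1) :
    HasDerivAt (fun y => y / √(1 - y ^ 2)) (√(1 - x ^ 2) ^ 3)⁻¹ x := by
  have hpos : 0 < 1 - x ^ 2 := by linarith
  have hsq : √(1 - x ^ 2) ^ 2 = 1 - x ^ 2 := sq_sqrt hpos.le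
  have hs : 0 < √(1 - x ^ 2) := sqrt_pos.2 hpos
  have hroot : HasDerivAt (fun y => √(1 - y ^ 2)) (-x / √(1 - x ^ 2)) x := by
    convert ((hasDerivAt_pow 2 x).const_sub 1).sqrt hpos.ne' using 1
    norm_num
    ring
  refine ((hasDerivAt_id' x).div hroot hs.ne').congr_deriv ?_
  field_simp
  linear_combination hsq

lemma hasDerivAt_tangentCoord (t : ℝ) :
    HasDerivAt tangentCoord (glueDeriv2 t / √(1 - glueDeriv t ^ 2) ^ 3) t := by
  refine ((hasDerivAt_div_sqrt_one_sub_sq (glueDeriv_sq_lt_one t)).comp t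
    (hasDerivAt_glueDeriv t)).congr_deriv ?_
  ring

lemma deriv_tangentCoord_pos {t : ℝ} (h0 : 0 < t) (h1 : t < 1 / 2) :
    0 < deriv tangentCoord t := by
  rw [(hasDerivAt_tangentCoord t).deriv]
  have := sqrt_pos.2 (sub_pos.2 (glueDeriv_sq_lt_one t))
  exact div_pos (glueDeriv2_pos h0 h1) (by positivity)

lemma deriv_tangentCoord_of_nonpos {t : ℝ} (ht : t ≤ 0) : deriv tangentCoord t = 0 := by
  rw [(hasDerivAt_tangentCoord t).deriv, glueDeriv2_of_nonpos ht, zero_div]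

lemma contDiff_mink {n : WithTop ℕ∞} {f g : ℝ → Fin 4 → ℝ} (hf : ContDiff ℝ n f)
    (hg : ContDiff ℝ n g) : ContDiff ℝ n fun t => mink (f t) (g t) := by
  have hf' := contDiff_pi.1 hf
  have hg' := contDiff_pi.1 hg
  unfold mink
  fun_prop

def unitTangent (γ : ℝ → Fin 4 → ℝ) (t : ℝ) : Fin 4 → ℝ :=
  (√(-mink (deriv γ t) (deriv γ t)))⁻¹ • deriv γ t

lemma unitTangentNoD_eq_unitTangent : unitTangentNoD = unitTangent gammaNoD := rfl

lemma contDiff_unitTangent {n : WithTop ℕ∞} {γ : ℝ → Fin 4 → ℝ} (hγ : ContDiff ℝ (n + 1) γ)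
    (htime : ∀ t, mink (deriv γ t) (deriv γ t) < 0) : ContDiff ℝ n (unitTangent γ) := by
  have hγ' := hγ.deriv'
  have hpos (t : ℝ) : 0 < -mink (deriv γ t) (deriv γ t) := neg_pos.2 (htime t)
  have hsqrt := (contDiff_mink hγ' hγ').neg.sqrt fun t => (hpos t).ne'
  exact (hsqrt.inv fun t => (sqrt_pos.2 (hpos t)).ne').smul hγ'

lemma gammaNoD_eq : gammaNoD = fun t => ![t, expNegInvGlue t, expNegInvGlue (-t), 0] := by
  funext t
  rcases lt_trichotomy t 0 with ht | rfl | ht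
  · rw [expNegInvGlue.zero_of_nonpos ht.le]
    simp [gammaNoD, ht, ht.not_gt, expNegInvGlue]
  · simp [gammaNoD, expNegInvGlue.zero]
  · rw [expNegInvGlue.zero_of_nonpos (neg_nonpos.2 ht.le)]
    simp [gammaNoD, ht, expNegInvGlue, ht.not_ge]

lemma contDiff_gammaNoD : ContDiff ℝ (⊤ : ℕ∞) gammaNoD := by
  rw [gammaNoD_eq]
  refine contDiff_pi.2 fun i => ?_
  fin_cases i <;> simp only [Fin.zero_eta, Fin.mk_one, Fin.reduceFinMk, Matrix.cons_val]
  · exact contDiff_id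
  · exact expNegInvGlue.contDiff
  · exact expNegInvGlue.contDiff.comp contDiff_neg
  · exact contDiff_const

lemma deriv_gammaNoD (t : ℝ) : deriv gammaNoD t = ![1, glueDeriv t, -glueDeriv (-t), 0] := by
  refine HasDerivAt.deriv ?_
  rw [gammaNoD_eq]
  refine hasDerivAt_pi.2 fun i => ?_
  fin_cases i <;> simp only [Fin.zero_eta, Fin.mk_one, Fin.reduceFinMk, Matrix.cons_val]
  · exact hasDerivAt_id t
  · exact hasDerivAt_expNegInvGlue t
  · simpa [Function.comp_def] using (hasDerivAt_expNegInvGlue (-t)).comp t (hasDerivAt_neg t)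
  · exact hasDerivAt_const t 0

lemma mink_deriv_gammaNoD (t : ℝ) :
    mink (deriv gammaNoD t) (deriv gammaNoD t) = -(1 - glueDeriv t ^ 2 - glueDeriv (-t) ^ 2) := by
  simp only [mink, deriv_gammaNoD, Matrix.cons_val_zero, Matrix.cons_val_one, Matrix.cons_val]
  ring

lemma mink_deriv_gammaNoD_neg (t : ℝ) : mink (deriv gammaNoD t) (deriv gammaNoD t) < 0 := by
  rw [mink_deriv_gammaNoD, neg_neg_iff_pos, sub_sub, sub_pos]
  rcases le_total t 0 with ht | ht
  · simpa [glueDeriv_of_nonpos ht] using glueDeriv_sq_lt_one (-t)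
  · simpa [glueDeriv_of_nonpos (neg_nonpos.2 ht)] using glueDeriv_sq_lt_one t

lemma unitTangentNoD_eq : unitTangentNoD = fun t =>
    ![(√(1 - glueDeriv t ^ 2 - glueDeriv (-t) ^ 2))⁻¹, tangentCoord t, -tangentCoord (-t), 0] := by
  funext t
  rw [unitTangentNoD, mink_deriv_gammaNoD, neg_neg, deriv_gammaNoD]
  ext i
  fin_cases i
  · simp
  · rcases le_total t 0 with ht | ht
    · simp [tangentCoord, glueDeriv_of_nonpos ht]
    · simp [tangentCoord, glueDeriv_of_nonpos (neg_nonpos.2 ht), div_eq_inv_mul]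
  · rcases le_total t 0 with ht | ht
    · simp [tangentCoord, glueDeriv_of_nonpos ht, div_eq_inv_mul]
    · simp [tangentCoord, glueDeriv_of_nonpos (neg_nonpos.2 ht)]
  · simp

lemma unitTangentNoD_zero : unitTangentNoD 0 = ![1, 0, 0, 0] := by
  simp [unitTangentNoD_eq, tangentCoord, glueDeriv_of_nonpos le_rfl]

lemma deriv_unitTangentNoD_apply (t : ℝ) (i : Fin 4) :
    deriv unitTangentNoD t i = deriv (fun s => unitTangentNoD s i) t := by
  have hγ : ContDiff ℝ (1 + 1) gammaNoD := contDiff_gammaNoD.of_le (by norm_cast)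
  have hT := (contDiff_unitTangent hγ mink_deriv_gammaNoD_neg).differentiable one_ne_zero
  rw [unitTangentNoD_eq_unitTangent, deriv_pi (differentiableAt_pi.1 (hT t))]

lemma deriv_unitTangentNoD_one (t : ℝ) : deriv unitTangentNoD t 1 = deriv tangentCoord t := by
  rw [deriv_unitTangentNoD_apply, unitTangentNoD_eq]
  simp

lemma deriv_unitTangentNoD_two (t : ℝ) :
    deriv unitTangentNoD t 2 = deriv tangentCoord (-t) := by
  rw [deriv_unitTangentNoD_apply, unitTangentNoD_eq]
  simp [deriv_comp_neg]

lemma deriv_unitTangentNoD_three (t : ℝ) : deriv unitTangentNoD t 3 = 0 := by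
  rw [deriv_unitTangentNoD_apply, unitTangentNoD_eq]
  simp

lemma apply_eq_zero_of_eq_smul {ι R : Type*} [MulZeroClass R] [NoZeroDivisors R] {v w : ι → R}
    {c : R} (h : v = c • w) {i j : ι} (hi : v i ≠ 0) (hj : v j = 0) : w j = 0 := by
  have hc : c ≠ 0 := by
    rintro rfl
    simp [h] at hi
  rw [h, Pi.smul_apply, smul_eq_mul] at hj
  exact (mul_eq_zero.1 hj).resolve_left hc

lemma Continuous.eqOn_Icc_of_eqOn_Ioo {α : Type*} [TopologicalSpace α] [T2Space α]
    {f g : ℝ → α} (hf : Continuous f) (hg : Continuous g) {a b : ℝ} (hab : a < b)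
    (h : EqOn f g (Ioo a b)) : EqOn f g (Icc a b) :=
  h.of_subset_closure hf.continuousOn hg.continuousOn Ioo_subset_Icc_self (closure_Ioo hab.ne).ge

lemma apply_eq_zero_of_deriv_unitTangentNoD_eq_smul_of_pos {v : Fin 4 → ℝ} {c t : ℝ}
    (h : deriv unitTangentNoD t = c • v) (h0 : 0 < t) (h1 : t < 1 / 2) : v 2 = 0 ∧ v 3 = 0 := by
  have hne : deriv unitTangentNoD t 1 ≠ 0 := by
    rw [deriv_unitTangentNoD_one]
    exact (deriv_tangentCoord_pos h0 h1).ne'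
  have hzero : deriv unitTangentNoD t 2 = 0 := by
    rw [deriv_unitTangentNoD_two, deriv_tangentCoord_of_nonpos (by linarith)]
  exact ⟨apply_eq_zero_of_eq_smul h hne hzero,
    apply_eq_zero_of_eq_smul h hne (deriv_unitTangentNoD_three t)⟩

lemma apply_eq_zero_of_deriv_unitTangentNoD_eq_smul_of_neg {v : Fin 4 → ℝ} {c t : ℝ}
    (h : deriv unitTangentNoD t = c • v) (h0 : -(1 / 2) < t) (h1 : t < 0) : v 1 = 0 := by
  have hne : deriv unitTangentNoD t 2 ≠ 0 := by
    rw [deriv_unitTangentNoD_two]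
    exact (deriv_tangentCoord_pos (by linarith) (by linarith)).ne'
  have hzero : deriv unitTangentNoD t 1 = 0 := by
    rw [deriv_unitTangentNoD_one, deriv_tangentCoord_of_nonpos h1.le]
  exact apply_eq_zero_of_eq_smul h hne hzero

/-- `gammaNoD` is a smooth regular time-like curve that admits no smooth
unit space-like normal field `D₁` with `T' = d₁ D₁`. -/
theorem stmt_11 :
    ContDiff ℝ (⊤ : ℕ∞) gammaNoD ∧
    (∀ t : ℝ, mink (deriv gammaNoD t) (deriv gammaNoD t) < 0) ∧
    ¬ ∃ (D₁ : ℝ → Fin 4 → ℝ) (d₁ : ℝ → ℝ),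
        ContDiff ℝ (⊤ : ℕ∞) D₁ ∧ ContDiff ℝ (⊤ : ℕ∞) d₁ ∧
        ∀ t : ℝ,
          mink (D₁ t) (D₁ t) = 1 ∧ mink (unitTangentNoD t) (D₁ t) = 0 ∧
          deriv unitTangentNoD t = d₁ t • D₁ t := by
  refine ⟨contDiff_gammaNoD, mink_deriv_gammaNoD_neg, ?_⟩
  rintro ⟨D₁, d₁, hD₁, -, hframe⟩
  have hcont (i : Fin 4) : Continuous fun t => D₁ t i := (continuous_apply i).comp hD₁.continuous
  have hright : ∀ t ∈ Ioo (0 : ℝ) (1 / 2), D₁ t 2 = 0 ∧ D₁ t 3 = 0 := fun t ht =>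
    apply_eq_zero_of_deriv_unitTangentNoD_eq_smul_of_pos (hframe t).2.2 ht.1 ht.2
  have hleft : ∀ t ∈ Ioo (-(1 / 2) : ℝ) 0, D₁ t 1 = 0 := fun t ht =>
    apply_eq_zero_of_deriv_unitTangentNoD_eq_smul_of_neg (hframe t).2.2 ht.1 ht.2
  have h1 : D₁ 0 1 = 0 := (hcont 1).eqOn_Icc_of_eqOn_Ioo continuous_const (by norm_num) hleft
    (right_mem_Icc.2 (by norm_num))
  have h2 : D₁ 0 2 = 0 := (hcont 2).eqOn_Icc_of_eqOn_Ioo continuous_const (by norm_num)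
    (fun t ht => (hright t ht).1) (left_mem_Icc.2 (by norm_num))
  have h3 : D₁ 0 3 = 0 := (hcont 3).eqOn_Icc_of_eqOn_Ioo continuous_const (by norm_num)
    (fun t ht => (hright t ht).2) (left_mem_Icc.2 (by norm_num))
  have h0 : D₁ 0 0 = 0 := by simpa [unitTangentNoD_zero, mink] using (hframe 0).2.1
  simpa [mink, h0, h1, h2, h3] using (hframe 0).1
end
end

section
/- Let γ : I → 𝕃⁴ be a time-like curve parametrized by proper time that admits a Frenet frame (T,F₁,F₂,F₃) with functions f₁,f₂,f₃ (f₁ > 0, f₂ > 0). Then every generalized Bishop frame (T,Z₁,Z₂,Z₃) of type F along γ, with coefficient functions x₁,x₂,x₃, coincides with the Frenet frame up to sign: there exist ε₁,ε₂,ε₃ ∈ {-1,1} such that Zᵢ = εᵢFᵢ on I for i = 1,2,3, and moreover x₁ = ε₁f₁, x₂ = ε₁ε₂f₂, x₃ = ε₂ε₃f₃. -/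
open Set Real

noncomputable section

/-!
From `T' = x₁ Z₁ = f₁ F₁` with `Z₁, F₁` unit space-like we get `x₁² = f₁²`; as `f₁ > 0` and `I` is
connected, `x₁ / f₁` is a constant sign `ε₁`, so `Z₁ = ε₁ F₁`. Since `I` is open this identity can
be differentiated, and comparing `Z₁'` with `ε₁ F₁'` gives `x₂ Z₂ = ε₁ f₂ F₂`, whence `ε₂` in the
same way. Comparing `Z₂'` with `ε₂ F₂'` only gives `x₃ Z₃ = ε₂ f₃ F₃`, and `f₃` may vanish; instead,
`Z₃` is orthogonal to `T, F₁, F₂`, so in dimension four `Z₃ = ⟨F₃, Z₃⟩ F₃`, and this continuous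
coefficient squares to `1`, hence is a constant sign `ε₃`.
-/

/- With `M` the matrix of rows `v i` and `D = diagonal η`, `hv` says `M * D * Mᵀ = D`, so that
`D * Mᵀ * D` is a left inverse of `M`. -/
lemma eq_zero_of_forall_dotProduct_eq_zero {ι : Type*} [Fintype ι] [DecidableEq ι]
    {η : ι → ℝ} (hη : η * η = 1) {v : ι → ι → ℝ}
    (hv : ∀ i j, v i ⬝ᵥ (η * v j) = if i = j then η i else 0)
    {w : ι → ℝ} (hw : ∀ i, v i ⬝ᵥ (η * w) = 0) : w = 0 := by
  set M : Matrix ι ι ℝ := Matrix.of v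
  set D : Matrix ι ι ℝ := Matrix.diagonal η
  have hMDM : M * D * M.transpose = D := by
    ext i j
    rw [Matrix.mul_apply]
    simpa [M, D, Matrix.diagonal_apply, dotProduct, mul_assoc, mul_comm, mul_left_comm] using hv i j
  have hright : M * (D * M.transpose * D) = 1 := by
    rw [← Matrix.mul_assoc, ← Matrix.mul_assoc, hMDM, Matrix.diagonal_mul_diagonal, ← Pi.mul_def,
      hη]
    exact Matrix.diagonal_one
  have hleft : D * M.transpose * D * M = 1 := mul_eq_one_comm.mp hright
  have hMw : M.mulVec (η * w) = 0 := funext hw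
  have hηw : η * w = 0 := by
    rw [← Matrix.one_mulVec (η * w), ← hleft, ← Matrix.mulVec_mulVec, hMw, Matrix.mulVec_zero]
  rw [← one_mul w, ← hη, mul_assoc, hηw, mul_zero]

lemma mink_comm (x y : Fin 4 → ℝ) : mink x y = mink y x := by
  unfold mink; ring

lemma mink_smul_left (a : ℝ) (x y : Fin 4 → ℝ) : mink (a • x) y = a * mink x y := by
  simp only [mink, Pi.smul_apply, smul_eq_mul]; ring

lemma mink_smul_right (a : ℝ) (x y : Fin 4 → ℝ) : mink x (a • y) = a * mink x y := by
  simp only [mink, Pi.smul_apply, smul_eq_mul]; ring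

lemma mink_sub_right (x y z : Fin 4 → ℝ) : mink x (y - z) = mink x y - mink x z := by
  simp only [mink, Pi.sub_apply]; ring

lemma eq_of_smul_eq_smul_of_mink_self_eq_one {a b : ℝ} {v : Fin 4 → ℝ} (hv : mink v v = 1)
    (h : a • v = b • v) : a = b := by
  refine smul_left_injective ℝ ?_ h
  rintro rfl
  simp [mink] at hv

def minkSign : Fin 4 → ℝ := ![-1, 1, 1, 1]

lemma mink_eq_dotProduct (x y : Fin 4 → ℝ) : mink x y = x ⬝ᵥ (minkSign * y) := by
  simp [mink, minkSign, dotProduct, Fin.sum_univ_four]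

lemma ContinuousOn.mink {I : Set ℝ} {f g : ℝ → Fin 4 → ℝ} (hf : ContinuousOn f I)
    (hg : ContinuousOn g I) : ContinuousOn (fun s => mink (f s) (g s)) I := by
  simp only [_root_.mink]; fun_prop

lemma OrthFrame.eq_zero_of_mink_eq_zero {I : Set ℝ} {T F₁ F₂ F₃ : ℝ → Fin 4 → ℝ}
    (hF : OrthFrame I T F₁ F₂ F₃) {s : ℝ} (hs : s ∈ I) (hT : mink (T s) (T s) = -1)
    {w : Fin 4 → ℝ} (h₀ : mink (T s) w = 0) (h₁ : mink (F₁ s) w = 0)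
    (h₂ : mink (F₂ s) w = 0) (h₃ : mink (F₃ s) w = 0) : w = 0 := by
  obtain ⟨h11, h22, h33, h12, h13, h23, h01, h02, h03⟩ := hF.2.2.2 s hs
  refine eq_zero_of_forall_dotProduct_eq_zero (η := minkSign) (v := ![T s, F₁ s, F₂ s, F₃ s])
    ?_ ?_ ?_
  · funext k; fin_cases k <;> simp [minkSign]
  · intro i j
    fin_cases i <;> fin_cases j <;> simp only [← mink_eq_dotProduct] <;>
      simp [minkSign, mink_comm (F₁ s) (T s), mink_comm (F₂ s) (T s), mink_comm (F₃ s) (T s),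
        mink_comm (F₂ s) (F₁ s), mink_comm (F₃ s) (F₁ s), mink_comm (F₃ s) (F₂ s), *]
  · intro i; fin_cases i <;> simp [← mink_eq_dotProduct, *]

lemma OrthFrame.eq_mink_smul_of_mink_eq_zero {I : Set ℝ} {T F₁ F₂ F₃ : ℝ → Fin 4 → ℝ}
    (hF : OrthFrame I T F₁ F₂ F₃) {s : ℝ} (hs : s ∈ I) (hT : mink (T s) (T s) = -1)
    {w : Fin 4 → ℝ} (h₀ : mink (T s) w = 0) (h₁ : mink (F₁ s) w = 0)
    (h₂ : mink (F₂ s) w = 0) : w = mink (F₃ s) w • F₃ s := by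
  obtain ⟨-, -, h33, -, h13, h23, -, -, h03⟩ := hF.2.2.2 s hs
  refine sub_eq_zero.mp (hF.eq_zero_of_mink_eq_zero hs hT ?_ ?_ ?_ ?_) <;>
    simp [mink_sub_right, mink_smul_right, *]

lemma exists_sign_of_smul_eq_smul {I : Set ℝ} (hI : IsPreconnected I) {a b : ℝ → ℝ}
    {u v : ℝ → Fin 4 → ℝ} (ha : ContinuousOn a I) (hb : ContinuousOn b I)
    (hb₀ : ∀ s ∈ I, b s ≠ 0) (hu : ∀ s ∈ I, mink (u s) (u s) = 1)
    (hv : ∀ s ∈ I, mink (v s) (v s) = 1) (h : ∀ s ∈ I, a s • u s = b s • v s) :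
    ∃ ε : ℝ, (ε = 1 ∨ ε = -1) ∧ ∀ s ∈ I, u s = ε • v s ∧ a s = ε * b s := by
  have hsq : EqOn (a ^ 2) (b ^ 2) I := fun s hs => by
    have h' := congrArg (fun x => mink x x) (h s hs)
    simp only [mink_smul_left, mink_smul_right, hu s hs, hv s hs] at h'
    simpa [sq] using h'
  have of_coeff_eq : ∀ ε : ℝ, ε * ε = 1 → (∀ s ∈ I, a s = ε * b s) →
      ∀ s ∈ I, u s = ε • v s ∧ a s = ε * b s := fun ε hε hab s hs => by
    refine ⟨?_, hab s hs⟩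
    have h' : b s • (ε • u s) = b s • v s := by
      rw [smul_smul, mul_comm, ← hab s hs, h s hs]
    rw [← smul_right_injective _ (hb₀ s hs) h', smul_smul, hε, one_smul]
  rcases hI.eq_or_eq_neg_of_sq_eq ha hb hsq (hb₀ _) with hab | hab
  · exact ⟨1, Or.inl rfl, of_coeff_eq 1 (one_mul 1) fun s hs => by simp [hab hs]⟩
  · exact ⟨-1, Or.inr rfl, of_coeff_eq (-1) (by norm_num) fun s hs => by simp [hab hs]⟩

lemma deriv_eq_smul_deriv_of_eqOn {I : Set ℝ} (hI : IsOpen I) {Z F : ℝ → Fin 4 → ℝ} {c : ℝ}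
    (h : ∀ s ∈ I, Z s = c • F s) {s : ℝ} (hs : s ∈ I) : deriv Z s = c • deriv F s := by
  rw [Filter.EventuallyEq.deriv_eq (f := fun t => c • F t), deriv_fun_const_smul_field]
  filter_upwards [hI.mem_nhds hs] using h

lemma eq_smul_of_deriv_eq_add {I : Set ℝ} (hI : IsOpen I) {Z F : ℝ → Fin 4 → ℝ} {c : ℝ}
    (h : ∀ s ∈ I, Z s = c • F s) {s : ℝ} (hs : s ∈ I) {A B A' B' : Fin 4 → ℝ}
    (hZ : deriv Z s = A + B) (hF : deriv F s = A' + B') (hA : A = c • A') : B = c • B' := by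
  have h' := deriv_eq_smul_deriv_of_eqOn hI h hs
  rw [hZ, hF, smul_add, hA] at h'
  exact add_left_cancel h'

lemma OrthFrame.exists_third_eq_sign_smul {I : Set ℝ} (hI : IsPreconnected I)
    {T F₁ F₂ F₃ Z₁ Z₂ Z₃ : ℝ → Fin 4 → ℝ} (hF : OrthFrame I T F₁ F₂ F₃)
    (hZ : OrthFrame I T Z₁ Z₂ Z₃) (hT : ∀ s ∈ I, mink (T s) (T s) = -1) {ε₁ ε₂ : ℝ}
    (hε₁ : ε₁ ≠ 0) (hε₂ : ε₂ ≠ 0) (h₁ : ∀ s ∈ I, Z₁ s = ε₁ • F₁ s)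
    (h₂ : ∀ s ∈ I, Z₂ s = ε₂ • F₂ s) :
    ∃ ε₃ : ℝ, (ε₃ = 1 ∨ ε₃ = -1) ∧ ∀ s ∈ I, Z₃ s = ε₃ • F₃ s := by
  set g : ℝ → ℝ := fun s => mink (F₃ s) (Z₃ s)
  have hZ₃ : ∀ s ∈ I, Z₃ s = g s • F₃ s := fun s hs => by
    obtain ⟨-, -, -, -, h13, h23, -, -, h03⟩ := hZ.2.2.2 s hs
    rw [h₁ s hs, mink_smul_left] at h13
    rw [h₂ s hs, mink_smul_left] at h23
    exact hF.eq_mink_smul_of_mink_eq_zero hs (hT s hs) h03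
      ((mul_eq_zero.mp h13).resolve_left hε₁) ((mul_eq_zero.mp h23).resolve_left hε₂)
  have hg : EqOn (g ^ 2) 1 I := fun s hs => by
    have h33 := (hZ.2.2.2 s hs).2.2.1
    rw [hZ₃ s hs, mink_smul_left, mink_smul_right, (hF.2.2.2 s hs).2.2.1] at h33
    simpa [sq] using h33
  rcases hI.eq_one_or_eq_neg_one_of_sq_eq (f := g)
      (hF.2.2.1.continuousOn.mink hZ.2.2.1.continuousOn) hg with hg₁ | hg₁
  · exact ⟨1, Or.inl rfl, fun s hs => by rw [hZ₃ s hs, hg₁ hs, Pi.one_apply]⟩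
  · exact ⟨-1, Or.inr rfl, fun s hs => by rw [hZ₃ s hs, hg₁ hs, Pi.neg_apply, Pi.one_apply]⟩

/-- if a time-like curve parametrized by proper time admits a Frenet frame,
then every generalized Bishop frame of type F coincides with the Frenet frame up to sign,
and the coefficient functions agree up to the corresponding signs. -/
theorem stmt_12 (I : Set ℝ) (hIopen : IsOpen I) (hIconn : I.OrdConnected)
    (γ : ℝ → Fin 4 → ℝ) (hγ : ProperTime I γ)
    -- the Frenet frame
    (F₁ F₂ F₃ : ℝ → Fin 4 → ℝ) (f₁ f₂ f₃ : ℝ → ℝ)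
    (hFr : OrthFrame I (deriv γ) F₁ F₂ F₃) (hf : Smooth3 I f₁ f₂ f₃)
    (hf₁pos : ∀ s ∈ I, 0 < f₁ s) (hf₂pos : ∀ s ∈ I, 0 < f₂ s)
    (hFrEq : ∀ s ∈ I,
      deriv (deriv γ) s = f₁ s • F₁ s ∧
      deriv F₁ s = f₁ s • deriv γ s + f₂ s • F₂ s ∧
      deriv F₂ s = (-(f₂ s)) • F₁ s + f₃ s • F₃ s ∧
      deriv F₃ s = (-(f₃ s)) • F₂ s)
    -- an arbitrary generalized Bishop frame of type F
    (Z₁ Z₂ Z₃ : ℝ → Fin 4 → ℝ) (x₁ x₂ x₃ : ℝ → ℝ)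
    (hZ : OrthFrame I (deriv γ) Z₁ Z₂ Z₃) (hx : Smooth3 I x₁ x₂ x₃)
    (hZEq : ∀ s ∈ I,
      deriv (deriv γ) s = x₁ s • Z₁ s ∧
      deriv Z₁ s = x₁ s • deriv γ s + x₂ s • Z₂ s ∧
      deriv Z₂ s = (-(x₂ s)) • Z₁ s + x₃ s • Z₃ s ∧
      deriv Z₃ s = (-(x₃ s)) • Z₂ s) :
    ∃ ε₁ ε₂ ε₃ : ℝ, (ε₁ = 1 ∨ ε₁ = -1) ∧ (ε₂ = 1 ∨ ε₂ = -1) ∧ (ε₃ = 1 ∨ ε₃ = -1) ∧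
      ∀ s ∈ I,
        Z₁ s = ε₁ • F₁ s ∧ Z₂ s = ε₂ • F₂ s ∧ Z₃ s = ε₃ • F₃ s ∧
        x₁ s = ε₁ * f₁ s ∧ x₂ s = ε₁ * ε₂ * f₂ s ∧ x₃ s = ε₂ * ε₃ * f₃ s := by
  have hI := hIconn.isPreconnected
  obtain ⟨ε₁, hε₁, hZF₁⟩ := exists_sign_of_smul_eq_smul hI hx.1.continuousOn
    hf.1.continuousOn (fun s hs => (hf₁pos s hs).ne') (fun s hs => (hZ.2.2.2 s hs).1)
    (fun s hs => (hFr.2.2.2 s hs).1) fun s hs => (hZEq s hs).1.symm.trans (hFrEq s hs).1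
  have hε₁sq := mul_self_eq_one_iff.mpr hε₁
  have key₂ : ∀ s ∈ I, x₂ s • Z₂ s = (ε₁ * f₂ s) • F₂ s := fun s hs => by
    rw [← smul_smul]
    exact eq_smul_of_deriv_eq_add hIopen (fun t ht => (hZF₁ t ht).1) hs (hZEq s hs).2.1
      (hFrEq s hs).2.1 (by rw [(hZF₁ s hs).2, smul_smul])
  obtain ⟨ε₂, hε₂, hZF₂⟩ := exists_sign_of_smul_eq_smul (b := fun s => ε₁ * f₂ s) hI
    hx.2.1.continuousOn (continuousOn_const.mul hf.2.1.continuousOn)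
    (fun s hs => mul_ne_zero (left_ne_zero_of_mul_eq_one hε₁sq) (hf₂pos s hs).ne')
    (fun s hs => (hZ.2.2.2 s hs).2.1) (fun s hs => (hFr.2.2.2 s hs).2.1) key₂
  have key₃ : ∀ s ∈ I, x₃ s • Z₃ s = (ε₂ * f₃ s) • F₃ s := fun s hs => by
    rw [← smul_smul]
    refine eq_smul_of_deriv_eq_add hIopen (fun t ht => (hZF₂ t ht).1) hs (hZEq s hs).2.2.1
      (hFrEq s hs).2.2.1 ?_
    rw [(hZF₁ s hs).1, (hZF₂ s hs).2, smul_smul, smul_smul]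
    congr 1
    linear_combination -(ε₂ * f₂ s) * hε₁sq
  obtain ⟨ε₃, hε₃, hZF₃⟩ := hFr.exists_third_eq_sign_smul hI hZ hγ.2
    (left_ne_zero_of_mul_eq_one hε₁sq) (left_ne_zero_of_mul_eq_one (mul_self_eq_one_iff.mpr hε₂))
    (fun s hs => (hZF₁ s hs).1) fun s hs => (hZF₂ s hs).1
  refine ⟨ε₁, ε₂, ε₃, hε₁, hε₂, hε₃, fun s hs => ⟨(hZF₁ s hs).1, (hZF₂ s hs).1, hZF₃ s hs,
    (hZF₁ s hs).2, by rw [(hZF₂ s hs).2]; ring, ?_⟩⟩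
  have hx₃ : x₃ s * ε₃ = ε₂ * f₃ s := eq_of_smul_eq_smul_of_mink_self_eq_one
    (hFr.2.2.2 s hs).2.2.1 (by rw [← smul_smul, ← hZF₃ s hs]; exact key₃ s hs)
  linear_combination ε₃ * hx₃ - x₃ s * mul_self_eq_one_iff.mpr hε₃
end
end
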